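/- arXiv:1508.03778 — 2 statements merged into one kernel-verified Lean document; each statement's English description precedes it below -/
import Mathlib

section
/- Let X be a nonempty compact metric space without isolated points, let μ be a positive regular Borel measure on X, and let ε > 0. Then there exists a Cantor set C ⊆ X such that μ(X \ C) < ε. -/
/-!
A nonempty perfect totally bounded set `E` can be split, up to a set of measure at most `η`, into
at least two pairwise disjoint nonempty perfect pieces of diameter at most `δ`: the pieces are the
closures of the traces on `E` of balls around the points of a finite net, cut apart along thin
annuli of small measure. Such annuli exist because only countably many of the disjoint spheres
about a point carry mass. Iterating the splitting, with the losses at the nodes summing to less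
than `ε`, gives a Cantor scheme of closed sets with vanishing diameters; its limit set is a Cantor
set, and every point of `E` outside it lies in one of the lost sets.
-/

open MeasureTheory

/-- A subset of a topological space is a Cantor set if, with the subspace topology,
it is homeomorphic to the Cantor space `ℕ → Bool`. -/
def IsCantorSet {X : Type*} [TopologicalSpace X] (C : Set X) : Prop :=
  Nonempty (C ≃ₜ (ℕ → Bool))

open Set Metric Filter Topology
open scoped ENNReal

theorem isCantorSet_range {X : Type*} [TopologicalSpace X] [T2Space X] {f : (ℕ → Bool) → X}
    (hf : Continuous f) (hinj : Function.Injective f) : IsCantorSet (range f) :=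
  ⟨(hf.isClosedEmbedding hinj).isEmbedding.toHomeomorph.symm⟩

namespace CantorScheme

open PiNat

variable {β α : Type*} {A : List β → Set α}

theorem Antitone.antitone_res (hA : CantorScheme.Antitone A) (y : ℕ → β) :
    _root_.Antitone fun n => A (res y n) :=
  antitone_nat_of_succ_le fun n => by
    rw [res_succ]
    exact hA _ _

theorem exists_forall_mem_res {x : α} (h₀ : x ∈ A []) (h : ∀ l, x ∈ A l → ∃ b, x ∈ A (b :: l)) :
    ∃ y : ℕ → β, ∀ n, x ∈ A (res y n) := by
  obtain ⟨b₀, -⟩ := h [] h₀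
  have : ∀ l, ∃ b, x ∈ A l → x ∈ A (b :: l) := fun l => by
    by_cases hl : x ∈ A l
    · obtain ⟨b, hb⟩ := h l hl
      exact ⟨b, fun _ => hb⟩
    · exact ⟨b₀, fun h => absurd h hl⟩
  choose next hnext using this
  let path : ℕ → List β := fun n => Nat.rec [] (fun _ l => next l :: l) n
  have hres : ∀ n, res (fun n => next (path n)) n = path n := by
    intro n
    induction n with
    | zero => rfl
    | succ n ih => rw [res_succ, ih]
  refine ⟨fun n => next (path n), fun n => ?_⟩
  rw [hres]
  induction n with
  | zero => exact h₀
  | succ n ih => exact hnext _ ih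

theorem VanishingDiam.eq_of_forall_mem [MetricSpace α] (hA : VanishingDiam A) {y : ℕ → β}
    {x z : α} (hx : ∀ n, x ∈ A (res y n)) (hz : ∀ n, z ∈ A (res y n)) : x = z :=
  edist_le_zero.1 <| ge_of_tendsto' (hA y) fun n => edist_le_ediam_of_mem (hx n) (hz n)

theorem exists_isCantorSet_subset [MetricSpace α] [CompleteSpace α] {A : List Bool → Set α}
    (hanti : ClosureAntitone A) (hdisj : CantorScheme.Disjoint A) (hdiam : VanishingDiam A)
    (hne : ∀ l, (A l).Nonempty) :
    ∃ C ⊆ A [], IsCantorSet C ∧ A [] \ C ⊆ ⋃ l, A l \ (A (false :: l) ∪ A (true :: l)) := by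
  have hdom := hanti.map_of_vanishingDiam hdiam hne
  let f : (ℕ → Bool) → α := fun y => (inducedMap A).2 ⟨y, hdom.symm ▸ mem_univ y⟩
  have hf : Continuous f := hdiam.map_continuous.comp (continuous_id.subtype_mk _)
  have hinj : Function.Injective f := fun y z h => congrArg Subtype.val (hdisj.map_injective h)
  refine ⟨range f, range_subset_iff.2 fun y => map_mem _ 0, isCantorSet_range hf hinj,
    fun x ⟨hx₀, hx⟩ => ?_⟩
  by_contra hgap
  simp only [mem_iUnion, Set.mem_sdiff, mem_union, not_exists, not_and, not_or, not_not] at hgap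
  obtain ⟨y, hy⟩ := exists_forall_mem_res hx₀ fun l hl =>
    (em (x ∈ A (false :: l))).elim (⟨false, ·⟩) fun h => ⟨true, hgap l hl h⟩
  exact hx ⟨y, hdiam.eq_of_forall_mem (fun n => map_mem _ n) hy⟩

end CantorScheme

section ThinAnnulus

variable {X : Type*} [PseudoMetricSpace X] [MeasurableSpace X] [OpensMeasurableSpace X]
  {E : Set X}

theorem exists_measure_sphere_eq_zero (μ : Measure X) [SFinite μ] (x : X) {a b : ℝ}
    (hab : a < b) : ∃ r ∈ Ioo a b, μ (sphere x r) = 0 := by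
  have hcount := Measure.countable_meas_pos_of_disjoint_iUnion (μ := μ)
    (fun r => (isClosed_sphere (x := x) (ε := r)).measurableSet)
    fun r s hrs => disjoint_left.2 fun y hr hs => hrs (hr.symm.trans hs)
  by_contra! h
  exact hab.not_ge <| Cardinal.Real.Ioo_countable_iff.1 <|
    hcount.mono fun r hr => pos_iff_ne_zero.2 (h r hr)

theorem exists_measure_closedBall_sdiff_ball_le (μ : Measure X) [IsFiniteMeasure μ] (x : X)
    {a b : ℝ} (hab : a < b) {η : ℝ≥0∞} (hη : 0 < η) :
    ∃ s t, a ≤ s ∧ s < t ∧ t ≤ b ∧ μ (closedBall x t \ ball x s) ≤ η := by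
  obtain ⟨r, ⟨har, hrb⟩, hr⟩ := exists_measure_sphere_eq_zero μ x hab
  have hlim : Tendsto (fun t => μ (closedBall x t \ ball x r)) (𝓝[>] r) (𝓝 0) := by
    have := tendsto_measure_biInter_gt (μ := μ) (s := fun t => closedBall x t \ ball x r) (a := r)
      (fun t _ => (isClosed_closedBall.measurableSet.diff measurableSet_ball).nullMeasurableSet)
      (fun t t' _ htt' => sdiff_subset_sdiff_left (closedBall_subset_closedBall htt'))
      ⟨r + 1, by linarith, measure_ne_top μ _⟩
    have hsphere : ⋂ t > r, closedBall x t \ ball x r = sphere x r := by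
      rw [← closedBall_sdiff_ball, ← biInter_gt_closedBall]
      ext y
      simp only [mem_iInter, Set.mem_sdiff, mem_closedBall, mem_ball, not_lt]
      exact ⟨fun h => ⟨fun t ht => (h t ht).1, (h (r + 1) (by linarith)).2⟩,
        fun h t ht => ⟨h.1 t ht, h.2⟩⟩
    rwa [hsphere, hr] at this
  obtain ⟨t, hηt, hrt, htb⟩ := ((hlim.eventually (ge_mem_nhds hη)).and
    (Ioo_mem_nhdsGT hrb)).exists
  exact ⟨r, t, har.le, hrt, htb.le, hηt⟩

theorem Perfect.exists_peel_ball (μ : Measure X) [IsFiniteMeasure μ] (hE : Perfect E) (x : X)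
    {r : ℝ} (hr : 0 < r) {η : ℝ≥0∞} (hη : 0 < η) :
    ∃ E₀ E₁ : Set X, Perfect E₀ ∧ Perfect E₁ ∧ Disjoint E₀ E₁ ∧
      E ∩ ball x r ⊆ E₀ ∧ E₀ ⊆ E ∧ ediam E₀ ≤ ENNReal.ofReal (4 * r) ∧
      E \ closedBall x (2 * r) ⊆ E₁ ∧ E₁ ⊆ E \ closedBall x r ∧ μ (E \ (E₀ ∪ E₁)) ≤ η := by
  obtain ⟨s, t, hrs, hst, ht, hμ⟩ :=
    exists_measure_closedBall_sdiff_ball_le μ x (by linarith : r < 2 * r) hη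
  have hE₀ : closure (ball x s ∩ E) ⊆ closedBall x s ∩ E :=
    (closure_inter_subset_inter_closure _ _).trans <|
      inter_subset_inter closure_ball_subset_closedBall hE.closed.closure_subset
  have hE₁ : closure ((closedBall x t)ᶜ ∩ E) ⊆ (ball x t)ᶜ ∩ E :=
    (closure_inter_subset_inter_closure _ _).trans <| inter_subset_inter
      (isOpen_ball.isClosed_compl.closure_subset_iff.2 <|
        compl_subset_compl.2 ball_subset_closedBall)
      hE.closed.closure_subset
  refine ⟨closure (ball x s ∩ E), closure ((closedBall x t)ᶜ ∩ E),
    (hE.2.open_inter isOpen_ball).perfect_closure,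
    (hE.2.open_inter isClosed_closedBall.isOpen_compl).perfect_closure,
    disjoint_left.2 fun y hy₀ hy₁ => (hE₁ hy₁).1 (closedBall_subset_ball hst (hE₀ hy₀).1),
    fun y hy => subset_closure ⟨ball_subset_ball hrs hy.2, hy.1⟩,
    fun y hy => (hE₀ hy).2, ?_,
    fun y hy => subset_closure ⟨fun h => hy.2 (closedBall_subset_closedBall ht h), hy.1⟩,
    fun y hy => ⟨(hE₁ hy).2, fun h => (hE₁ hy).1 (closedBall_subset_ball (hrs.trans_lt hst) h)⟩,
    (measure_mono fun y hy => ?_).trans hμ⟩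
  · refine ediam_le_of_forall_dist_le fun p hp q hq => ?_
    have hp' := (hE₀ hp).1
    have hq' := (hE₀ hq).1
    rw [mem_closedBall] at hp' hq'
    linarith [dist_triangle_right p q x]
  · refine ⟨not_not.1 fun h => hy.2 (Or.inr (subset_closure ⟨h, hy.1⟩)),
      fun h => hy.2 (Or.inl (subset_closure ⟨h, hy.1⟩))⟩

theorem Perfect.exists_cover_ediam_le_of_subset_biUnion (μ : Measure X) [IsFiniteMeasure μ]
    {r : ℝ} (hr : 0 < r) {cs : Set X} (hcs : cs.Finite) :
    ∀ {E : Set X}, Perfect E → E ⊆ ⋃ c ∈ cs, closedBall c r → ∀ {η : ℝ≥0∞}, 0 < η →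
      ∃ L : List (Set X), (∀ P ∈ L, Perfect P ∧ P ⊆ E ∧ ediam P ≤ ENNReal.ofReal (4 * r)) ∧
        L.Pairwise Disjoint ∧ μ (E \ ⋃ P ∈ L, P) ≤ η := by
  induction cs, hcs using Set.Finite.induction_on with
  | empty =>
    intro E _ hE η _
    refine ⟨[], by simp, List.Pairwise.nil, ?_⟩
    simp [subset_empty_iff.1 (by simpa using hE)]
  | @insert c cs _ _ ih =>
    intro E hE hcover η hη
    obtain ⟨E₀, E₁, hE₀, hE₁, hdisj, -, hE₀E, hdiam, -, hE₁E, hμ⟩ :=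
      hE.exists_peel_ball μ c hr (ENNReal.half_pos hη.ne')
    obtain ⟨L, hL, hLdisj, hLμ⟩ := ih hE₁ (fun y hy => by
      simpa [(hE₁E hy).2] using hcover (hE₁E hy).1) (ENNReal.half_pos hη.ne')
    refine ⟨E₀ :: L, ?_, List.pairwise_cons.2
      ⟨fun P hP => hdisj.mono_right (hL P hP).2.1, hLdisj⟩, ?_⟩
    · simp only [List.mem_cons, forall_eq_or_imp]
      exact ⟨⟨hE₀, hE₀E, hdiam⟩, fun P hP => ⟨(hL P hP).1, (hL P hP).2.1.trans
        (hE₁E.trans sdiff_subset), (hL P hP).2.2⟩⟩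
    · calc μ (E \ ⋃ P ∈ E₀ :: L, P)
          ≤ μ ((E \ (E₀ ∪ E₁)) ∪ (E₁ \ ⋃ P ∈ L, P)) := measure_mono fun y hy => by
            by_cases h : y ∈ E₁ <;> simp_all
        _ ≤ η / 2 + η / 2 := (measure_union_le _ _).trans (add_le_add hμ hLμ)
        _ = η := ENNReal.add_halves η

end ThinAnnulus

structure IsMeasureSplitting {X : Type*} [PseudoEMetricSpace X] [MeasurableSpace X]
    (μ : Measure X) (E : Set X) (δ : ℝ) (η : ℝ≥0∞) (L : List (Set X)) : Prop where
  two_le_length : 2 ≤ L.length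
  perfect : ∀ P ∈ L, Perfect P
  nonempty : ∀ P ∈ L, P.Nonempty
  subset : ∀ P ∈ L, P ⊆ E
  ediam_le : ∀ P ∈ L, ediam P ≤ ENNReal.ofReal δ
  pairwise_disjoint : L.Pairwise Disjoint
  measure_sdiff_le : μ (E \ ⋃ P ∈ L, P) ≤ η

section Splitting

variable {X : Type*} [MetricSpace X] [MeasurableSpace X] [OpensMeasurableSpace X] {E : Set X}

theorem Perfect.exists_nonempty_cover_ediam_le (μ : Measure X) [IsFiniteMeasure μ]
    (hE : Perfect E) (hne : E.Nonempty) (htb : TotallyBounded E) {δ : ℝ} (hδ : 0 < δ)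
    {η : ℝ≥0∞} (hη : 0 < η) :
    ∃ L : List (Set X), L ≠ [] ∧
      (∀ P ∈ L, Perfect P ∧ P.Nonempty ∧ P ⊆ E ∧ ediam P ≤ ENNReal.ofReal δ) ∧
      L.Pairwise Disjoint ∧ μ (E \ ⋃ P ∈ L, P) ≤ η := by
  classical
  obtain ⟨x, hx⟩ := hne
  have hr : 0 < δ / 4 := by positivity
  have h4r : ENNReal.ofReal (4 * (δ / 4)) = ENNReal.ofReal δ := by ring_nf
  obtain ⟨E₀, E₁, hE₀, hE₁, hdisj, hxE₀, hE₀E, hdiam₀, -, hE₁E, hμ₁⟩ :=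
    hE.exists_peel_ball μ x hr (ENNReal.half_pos hη.ne')
  obtain ⟨cs, hcs, hcover⟩ := totallyBounded_iff.1 htb _ hr
  obtain ⟨L, hL, hLdisj, hLμ⟩ := Perfect.exists_cover_ediam_le_of_subset_biUnion μ hr hcs hE₁
    (fun p hp => biUnion_mono subset_rfl (fun _ _ => ball_subset_closedBall)
      (hcover (hE₁E hp).1)) (ENNReal.half_pos hη.ne')
  refine ⟨E₀ :: L.filter fun P => P.Nonempty, List.cons_ne_nil _ _, ?_,
    List.pairwise_cons.2 ⟨fun P hP => hdisj.mono_right (hL P (List.mem_filter.1 hP).1).2.1,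
      hLdisj.filter _⟩, ?_⟩
  · simp only [List.mem_cons, forall_eq_or_imp, List.mem_filter, decide_eq_true_eq, and_imp]
    refine ⟨⟨hE₀, ⟨x, hxE₀ ⟨hx, mem_ball_self hr⟩⟩, hE₀E, h4r ▸ hdiam₀⟩,
      fun P hP hPne => ⟨(hL P hP).1, hPne, (hL P hP).2.1.trans (hE₁E.trans sdiff_subset),
        h4r ▸ (hL P hP).2.2⟩⟩
  · calc μ (E \ ⋃ P ∈ E₀ :: L.filter fun P => P.Nonempty, P)
        ≤ μ ((E \ (E₀ ∪ E₁)) ∪ (E₁ \ ⋃ P ∈ L, P)) := measure_mono fun p hp => by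
          by_cases h₁ : p ∈ E₁ <;> simp_all
          exact fun P hP hpP => hp.2.2 P hP ⟨p, hpP⟩ hpP
      _ ≤ η / 2 + η / 2 := (measure_union_le _ _).trans (add_le_add hμ₁ hLμ)
      _ = η := ENNReal.add_halves η

theorem Perfect.exists_isMeasureSplitting (μ : Measure X) [IsFiniteMeasure μ] (hE : Perfect E)
    (hne : E.Nonempty) (htb : TotallyBounded E) {δ : ℝ} (hδ : 0 < δ) {η : ℝ≥0∞} (hη : 0 < η) :
    ∃ L, IsMeasureSplitting μ E δ η L := by
  obtain ⟨y, hy⟩ := hne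
  obtain ⟨z, ⟨-, hz⟩, hzy⟩ := accPt_iff_nhds.1 (hE.acc y hy) univ univ_mem
  set r := min (δ / 4) (dist z y / 3)
  have hr : 0 < r := lt_min (by linarith) (by have := dist_pos.2 hzy; linarith)
  have h4r : ENNReal.ofReal (4 * r) ≤ ENNReal.ofReal δ :=
    ENNReal.ofReal_le_ofReal (by have := min_le_left (δ / 4) (dist z y / 3); linarith)
  obtain ⟨E₀, E₁, hE₀, hE₁, hdisj, hyE₀, hE₀E, hdiam₀, hzE₁, hE₁E, hμ₁⟩ :=
    hE.exists_peel_ball μ y hr (ENNReal.half_pos hη.ne')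
  -- `z` survives the peeling at `y`, so the rest of `E` still yields at least one piece.
  have hzE₁' : z ∈ E₁ := hzE₁ ⟨hz, fun h => by
    have := min_le_right (δ / 4) (dist z y / 3)
    linarith [mem_closedBall.1 h]⟩
  obtain ⟨L, hLne, hL, hLdisj, hLμ⟩ := hE₁.exists_nonempty_cover_ediam_le μ ⟨z, hzE₁'⟩
    (htb.subset (hE₁E.trans sdiff_subset)) hδ (ENNReal.half_pos hη.ne')
  refine ⟨E₀ :: L, ⟨by simpa [Nat.succ_le_iff, List.length_pos_iff] using hLne, ?_, ?_, ?_, ?_,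
    List.pairwise_cons.2 ⟨fun P hP => hdisj.mono_right (hL P hP).2.2.1, hLdisj⟩, ?_⟩⟩
  · exact List.forall_mem_cons.2 ⟨hE₀, fun P hP => (hL P hP).1⟩
  · exact List.forall_mem_cons.2 ⟨⟨y, hyE₀ ⟨hy, mem_ball_self hr⟩⟩, fun P hP => (hL P hP).2.1⟩
  · exact List.forall_mem_cons.2
      ⟨hE₀E, fun P hP => (hL P hP).2.2.1.trans (hE₁E.trans sdiff_subset)⟩
  · exact List.forall_mem_cons.2 ⟨hdiam₀.trans h4r, fun P hP => (hL P hP).2.2.2⟩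
  · calc μ (E \ ⋃ P ∈ E₀ :: L, P)
        ≤ μ ((E \ (E₀ ∪ E₁)) ∪ (E₁ \ ⋃ P ∈ L, P)) := measure_mono fun p hp => by
          by_cases h₁ : p ∈ E₁ <;> simp_all
      _ ≤ η / 2 + η / 2 := (measure_union_le _ _).trans (add_le_add hμ₁ hLμ)
      _ = η := ENNReal.add_halves η

end Splitting

def List.splitSingleton {α : Type*} (s : α → List α) : List α → List α
  | [a] => s a
  | l => l

theorem List.splitSingleton_cases {α : Type*} (s : α → List α) {l : List α} (hl : l ≠ []) :
    (∃ a, l = [a] ∧ l.splitSingleton s = s a) ∨ (2 ≤ l.length ∧ l.splitSingleton s = l) := by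
  match l, hl with
  | [a], _ => exact Or.inl ⟨a, rfl, rfl⟩
  | a :: b :: l, _ => exact Or.inr ⟨by simp, rfl⟩

section DisjointPerfectList

variable {X : Type*} [TopologicalSpace X]

structure IsDisjointPerfectList (E : Set X) (L : List (Set X)) : Prop where
  ne_nil : L ≠ []
  perfect : ∀ P ∈ L, Perfect P
  nonempty : ∀ P ∈ L, P.Nonempty
  subset : ∀ P ∈ L, P ⊆ E
  pairwise_disjoint : L.Pairwise Disjoint

theorem IsDisjointPerfectList.sublist {E : Set X} {L L₀ : List (Set X)}
    (hL : IsDisjointPerfectList E L) (h : L₀.Sublist L) (hne : L₀ ≠ []) :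
    IsDisjointPerfectList E L₀ :=
  ⟨hne, fun P hP => hL.perfect P (h.subset hP), fun P hP => hL.nonempty P (h.subset hP),
    fun P hP => hL.subset P (h.subset hP), hL.pairwise_disjoint.sublist h⟩

end DisjointPerfectList

section SplittingScheme

variable {X : Type*} {σ : List Bool → Set X → List (Set X)} {E : Set X}

-- The node `b :: l` consists of the first piece of the node `l` if `b = false` and of its
-- remaining pieces if `b = true`; a node made of a single piece is first split by `σ l`.
variable (σ E) in
def splittingPieces : List Bool → List (Set X)
  | [] => [E]
  | b :: l =>
    bif b then ((splittingPieces l).splitSingleton (σ l)).drop 1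
    else ((splittingPieces l).splitSingleton (σ l)).take 1

variable (σ E) in
def splittingScheme (l : List Bool) : Set X :=
  ⋃ P ∈ splittingPieces σ E l, P

theorem splittingScheme_nil : splittingScheme σ E [] = E := by
  simp [splittingScheme, splittingPieces]

theorem mem_splitSingleton_of_mem_splittingPieces_cons {b : Bool} {l : List Bool} {Q : Set X}
    (hQ : Q ∈ splittingPieces σ E (b :: l)) :
    Q ∈ (splittingPieces σ E l).splitSingleton (σ l) := by
  cases b
  · exact List.mem_of_mem_take hQ
  · exact List.mem_of_mem_drop hQ

theorem splittingScheme_false_union_true (l : List Bool) :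
    splittingScheme σ E (false :: l) ∪ splittingScheme σ E (true :: l) =
      ⋃ Q ∈ (splittingPieces σ E l).splitSingleton (σ l), Q := by
  conv_rhs => rw [← List.take_append_drop 1 ((splittingPieces σ E l).splitSingleton (σ l))]
  simp only [splittingScheme, splittingPieces, cond_false, cond_true, List.mem_append,
    iUnion_or, iUnion_union_distrib]

end SplittingScheme

section Tree

open PiNat

variable {X : Type*} [MetricSpace X] [MeasurableSpace X] {μ : Measure X}
  {σ : List Bool → Set X → List (Set X)} {E : Set X} {e : List Bool → ℝ≥0∞}

def SplitsPerfectSubsets (μ : Measure X) (E : Set X) (σ : List Bool → Set X → List (Set X))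
    (e : List Bool → ℝ≥0∞) : Prop :=
  ∀ l P, Perfect P → P.Nonempty → P ⊆ E →
    IsMeasureSplitting μ P (1 / ((l.length : ℝ) + 1)) (e l) (σ l P)

namespace SplitsPerfectSubsets

variable (hσ : SplitsPerfectSubsets μ E σ e)
include hσ

section SplitSingleton

variable {l : List Bool} {L : List (Set X)}

theorem isMeasureSplitting {P : Set X} (hP : IsDisjointPerfectList E [P]) :
    IsMeasureSplitting μ P (1 / ((l.length : ℝ) + 1)) (e l) (σ l P) :=
  hσ l P (hP.perfect P (by simp)) (hP.nonempty P (by simp)) (hP.subset P (by simp))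

theorem two_le_length (hL : IsDisjointPerfectList E L) :
    2 ≤ (L.splitSingleton (σ l)).length := by
  rcases List.splitSingleton_cases (σ l) hL.ne_nil with ⟨P, rfl, h⟩ | ⟨h, h'⟩
  · exact h ▸ (hσ.isMeasureSplitting hL).two_le_length
  · rwa [h']

theorem isDisjointPerfectList (hL : IsDisjointPerfectList E L) :
    IsDisjointPerfectList E (L.splitSingleton (σ l)) := by
  rcases List.splitSingleton_cases (σ l) hL.ne_nil with ⟨P, rfl, h⟩ | ⟨h, h'⟩
  · have hs := hσ.isMeasureSplitting (l := l) hL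
    rw [h]
    exact ⟨List.ne_nil_of_length_pos (by linarith [hs.two_le_length]), hs.perfect, hs.nonempty,
      fun Q hQ => (hs.subset Q hQ).trans (hL.subset P (by simp)), hs.pairwise_disjoint⟩
  · rwa [h']

theorem exists_superset (hL : IsDisjointPerfectList E L) :
    ∀ Q ∈ L.splitSingleton (σ l), ∃ P ∈ L, Q ⊆ P := by
  rcases List.splitSingleton_cases (σ l) hL.ne_nil with ⟨P, rfl, h⟩ | ⟨h, h'⟩
  · exact h ▸ fun Q hQ => ⟨P, by simp, (hσ.isMeasureSplitting hL).subset Q hQ⟩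
  · rw [h']
    exact fun Q hQ => ⟨Q, hQ, subset_rfl⟩

theorem measure_sdiff_le (hL : IsDisjointPerfectList E L) :
    μ ((⋃ P ∈ L, P) \ ⋃ Q ∈ L.splitSingleton (σ l), Q) ≤ e l := by
  rcases List.splitSingleton_cases (σ l) hL.ne_nil with ⟨P, rfl, h⟩ | ⟨h, h'⟩
  · simpa [h] using (hσ.isMeasureSplitting hL).measure_sdiff_le
  · simp [h']

theorem ediam_le {P : Set X} (hP : IsDisjointPerfectList E [P]) :
    ∀ Q ∈ [P].splitSingleton (σ l), ediam Q ≤ ENNReal.ofReal (1 / ((l.length : ℝ) + 1)) :=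
  (hσ.isMeasureSplitting hP).ediam_le

end SplitSingleton

theorem isDisjointPerfectList_splittingPieces (hE : Perfect E) (hne : E.Nonempty) (l : List Bool) :
    IsDisjointPerfectList E (splittingPieces σ E l) := by
  induction l with
  | nil => exact ⟨by simp [splittingPieces], by simpa [splittingPieces] using hE,
      by simpa [splittingPieces] using hne, by simp [splittingPieces], by simp [splittingPieces]⟩
  | cons b l ih =>
    have h2 := hσ.two_le_length (l := l) ih
    cases b
    · exact (hσ.isDisjointPerfectList ih).sublist (List.take_sublist _ _)
        (List.ne_nil_of_length_pos (by simp [splittingPieces]; omega))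
    · exact (hσ.isDisjointPerfectList ih).sublist (List.drop_sublist _ _)
        (List.ne_nil_of_length_pos (by simp [splittingPieces]; omega))

variable (hE : Perfect E) (hne : E.Nonempty)
include hE hne

theorem exists_superset_of_mem_splittingPieces_cons {b : Bool} {l : List Bool} {Q : Set X}
    (hQ : Q ∈ splittingPieces σ E (b :: l)) : ∃ P ∈ splittingPieces σ E l, Q ⊆ P :=
  hσ.exists_superset (hσ.isDisjointPerfectList_splittingPieces hE hne l) Q
    (mem_splitSingleton_of_mem_splittingPieces_cons hQ)

theorem antitone_splittingScheme : CantorScheme.Antitone (splittingScheme σ E) := fun _ _ =>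
  iUnion₂_subset fun _ hQ =>
    let ⟨_, hP, hQP⟩ := hσ.exists_superset_of_mem_splittingPieces_cons hE hne hQ
    hQP.trans (subset_biUnion_of_mem (u := id) hP)

theorem disjoint_splittingScheme_false_true (l : List Bool) :
    Disjoint (splittingScheme σ E (false :: l)) (splittingScheme σ E (true :: l)) := by
  have h := (hσ.isDisjointPerfectList (l := l)
    (hσ.isDisjointPerfectList_splittingPieces hE hne l)).pairwise_disjoint
  rw [← List.take_append_drop 1 ((splittingPieces σ E l).splitSingleton (σ l)),
    List.pairwise_append] at h
  simp only [splittingScheme, splittingPieces, cond_false, cond_true, disjoint_iUnion_left,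
    disjoint_iUnion_right]
  exact fun P hP Q hQ => h.2.2 Q hQ P hP

theorem disjoint_splittingScheme : CantorScheme.Disjoint (splittingScheme σ E) := by
  intro l a b hab
  have h := hσ.disjoint_splittingScheme_false_true hE hne l
  cases a <;> cases b
  exacts [absurd rfl hab, h, h.symm, absurd rfl hab]

theorem measure_splittingScheme_sdiff_le (l : List Bool) :
    μ (splittingScheme σ E l \
      (splittingScheme σ E (false :: l) ∪ splittingScheme σ E (true :: l))) ≤ e l := by
  rw [splittingScheme_false_union_true]
  exact hσ.measure_sdiff_le (hσ.isDisjointPerfectList_splittingPieces hE hne l)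

theorem isClosed_splittingScheme (l : List Bool) : IsClosed (splittingScheme σ E l) :=
  (splittingPieces σ E l).finite_toSet.isClosed_biUnion fun P hP =>
    ((hσ.isDisjointPerfectList_splittingPieces hE hne l).perfect P hP).closed

theorem splittingScheme_nonempty (l : List Bool) : (splittingScheme σ E l).Nonempty := by
  have hL := hσ.isDisjointPerfectList_splittingPieces hE hne l
  obtain ⟨P, hP⟩ := List.exists_mem_of_ne_nil _ hL.ne_nil
  exact (hL.nonempty P hP).mono (subset_biUnion_of_mem (u := id) hP)

theorem exists_length_splittingPieces_res_eq_one (y : ℕ → Bool) (j : ℕ) :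
    ∃ n ≥ j, (splittingPieces σ E (res y n)).length = 1 := by
  -- The children of a node with `k ≥ 2` pieces have `1` and `k - 1` pieces.
  suffices ∀ k j, (splittingPieces σ E (res y j)).length ≤ k →
      ∃ n ≥ j, (splittingPieces σ E (res y n)).length = 1 from this _ j le_rfl
  intro k
  induction k with
  | zero =>
    intro j hj
    exact absurd (List.eq_nil_of_length_eq_zero (Nat.le_zero.1 hj))
      (hσ.isDisjointPerfectList_splittingPieces hE hne _).ne_nil
  | succ k ih =>
    intro j hj
    have hL := hσ.isDisjointPerfectList_splittingPieces hE hne (res y j)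
    rcases List.splitSingleton_cases (σ (res y j)) hL.ne_nil with ⟨P, hP, -⟩ | ⟨h2, hsplit⟩
    · exact ⟨j, le_rfl, by simp [hP]⟩
    · have hnext : splittingPieces σ E (res y (j + 1)) =
          bif y j then (splittingPieces σ E (res y j)).drop 1
          else (splittingPieces σ E (res y j)).take 1 := by
        rw [res_succ, splittingPieces, hsplit]
      cases hy : y j
      · exact ⟨j + 1, by omega, by rw [hnext, hy]; simp; omega⟩
      · obtain ⟨n, hn, h1⟩ := ih (j + 1) (by rw [hnext, hy]; simp; omega)
        exact ⟨n, by omega, h1⟩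

theorem ediam_le_of_mem_splittingPieces_res {y : ℕ → Bool} {n m : ℕ}
    (hn : (splittingPieces σ E (res y n)).length = 1) (hm : n < m) {Q : Set X}
    (hQ : Q ∈ splittingPieces σ E (res y m)) :
    ediam Q ≤ ENNReal.ofReal (1 / ((n : ℝ) + 1)) := by
  induction m, Nat.succ_le_of_lt hm using Nat.le_induction generalizing Q with
  | base =>
    obtain ⟨P, hP⟩ := List.length_eq_one_iff.1 hn
    have hL := hσ.isDisjointPerfectList_splittingPieces hE hne (res y n)
    rw [res_succ] at hQ
    have := hσ.ediam_le (hP ▸ hL) Q (hP ▸ mem_splitSingleton_of_mem_splittingPieces_cons hQ)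
    rwa [res_length] at this
  | succ m hnm ih =>
    rw [res_succ] at hQ
    obtain ⟨P, hP, hQP⟩ := hσ.exists_superset_of_mem_splittingPieces_cons hE hne hQ
    exact (ediam_mono hQP).trans (ih (by omega) hP)

theorem vanishingDiam_splittingScheme : CantorScheme.VanishingDiam (splittingScheme σ E) := by
  intro y
  rw [ENNReal.tendsto_atTop_zero]
  intro ε hε
  have hδ : Tendsto (fun n : ℕ => ENNReal.ofReal (1 / ((n : ℝ) + 1))) atTop (𝓝 0) := by
    simpa using ENNReal.tendsto_ofReal tendsto_one_div_add_atTop_nhds_zero_nat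
  obtain ⟨N, hN⟩ := eventually_atTop.1 (hδ.eventually (ge_mem_nhds hε))
  obtain ⟨n₁, hn₁, h₁⟩ := hσ.exists_length_splittingPieces_res_eq_one hE hne y N
  obtain ⟨n₂, hn₂, h₂⟩ := hσ.exists_length_splittingPieces_res_eq_one hE hne y (n₁ + 1)
  -- The node at depth `n₂` is a single piece lying below the split single piece at depth `n₁`.
  obtain ⟨Q, hQ⟩ := List.length_eq_one_iff.1 h₂
  refine ⟨n₂, fun m hm => ?_⟩
  calc ediam (splittingScheme σ E (res y m))
      ≤ ediam (splittingScheme σ E (res y n₂)) :=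
        ediam_mono ((hσ.antitone_splittingScheme hE hne).antitone_res y hm)
    _ = ediam Q := by simp [splittingScheme, hQ]
    _ ≤ ε := (hσ.ediam_le_of_mem_splittingPieces_res hE hne h₁ (m := n₂) (by omega)
        (by simp [hQ])).trans (hN n₁ hn₁)

end SplitsPerfectSubsets

end Tree

theorem Perfect.exists_isCantorSet_measure_sdiff_lt {X : Type*} [MetricSpace X] [CompleteSpace X]
    [MeasurableSpace X] [OpensMeasurableSpace X] (μ : Measure X) [IsFiniteMeasure μ] {E : Set X}
    (hE : Perfect E) (hne : E.Nonempty) (htb : TotallyBounded E) {ε : ℝ≥0∞} (hε : ε ≠ 0) :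
    ∃ C ⊆ E, IsCantorSet C ∧ μ (E \ C) < ε := by
  obtain ⟨e, he, hsum⟩ := ENNReal.exists_pos_sum_of_countable' hε (List Bool)
  have : ∀ (l : List Bool) (P : Set X), ∃ L, Perfect P → P.Nonempty → P ⊆ E →
      IsMeasureSplitting μ P (1 / ((l.length : ℝ) + 1)) (e l) L := fun l P => by
    by_cases h : Perfect P ∧ P.Nonempty ∧ P ⊆ E
    · obtain ⟨L, hL⟩ :=
        h.1.exists_isMeasureSplitting μ h.2.1 (htb.subset h.2.2) Nat.one_div_pos_of_nat (he l)
      exact ⟨L, fun _ _ _ => hL⟩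
    · exact ⟨[], fun h₁ h₂ h₃ => absurd ⟨h₁, h₂, h₃⟩ h⟩
  choose σ hσ using this
  replace hσ : SplitsPerfectSubsets μ E σ e := hσ
  obtain ⟨C, hCE, hC, hgap⟩ := CantorScheme.exists_isCantorSet_subset
    ((hσ.antitone_splittingScheme hE hne).closureAntitone (hσ.isClosed_splittingScheme hE hne))
    (hσ.disjoint_splittingScheme hE hne) (hσ.vanishingDiam_splittingScheme hE hne)
    (hσ.splittingScheme_nonempty hE hne)
  rw [splittingScheme_nil] at hCE hgap
  refine ⟨C, hCE, hC, ?_⟩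
  calc μ (E \ C)
      ≤ ∑' l, μ (splittingScheme σ E l \
          (splittingScheme σ E (false :: l) ∪ splittingScheme σ E (true :: l))) :=
        (measure_mono hgap).trans (measure_iUnion_le _)
    _ ≤ ∑' l, e l := ENNReal.tsum_le_tsum (hσ.measure_splittingScheme_sdiff_le hE hne)
    _ < ε := hsum

theorem exists_cantorSet_almost_full_measure_general
    {X : Type*} [MetricSpace X] [CompactSpace X] [Nonempty X]
    (hX : ∀ x : X, ¬ IsOpen ({x} : Set X))
    [MeasurableSpace X] [BorelSpace X]
    (μ : Measure X) [IsFiniteMeasure μ]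
    {ε : ℝ} (hε : 0 < ε) :
    ∃ C : Set X, IsCantorSet C ∧ μ Cᶜ < ENNReal.ofReal ε := by
  have : PerfectSpace X := perfectSpace_iff_forall_not_isolated.2 fun x =>
    ⟨fun h => hX x ((isOpen_singleton_iff_punctured_nhds x).2 h)⟩
  obtain ⟨C, -, hC, hμ⟩ := Perfect.exists_isCantorSet_measure_sdiff_lt μ
    (PerfectSpace.univ_perfect X) univ_nonempty isCompact_univ.totallyBounded
    (ENNReal.ofReal_pos.2 hε).ne'
  exact ⟨C, hC, by rwa [compl_eq_univ_sdiff]⟩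

/-- Given a nonempty compact metric space `X` without isolated points, a (finite)
positive regular Borel measure `μ` on `X`, and `ε > 0`, there exists a Cantor set
`C ⊆ X` with `μ (X \ C) < ε`. -/
theorem exists_cantorSet_almost_full_measure
    {X : Type*} [MetricSpace X] [CompactSpace X] [Nonempty X]
    (hX : ∀ x : X, ¬ IsOpen ({x} : Set X))
    [MeasurableSpace X] [BorelSpace X]
    (μ : Measure X) [IsFiniteMeasure μ] [μ.InnerRegular] [μ.OuterRegular]
    {ε : ℝ} (hε : 0 < ε) :
    ∃ C : Set X, IsCantorSet C ∧ μ Cᶜ < ENNReal.ofReal ε :=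
  exists_cantorSet_almost_full_measure_general hX μ hε
end

section
/- Let X be a metric space and let μ be a σ-finite positive regular Borel measure on X. Then there exist an at most countable collection {C_n} of pairwise disjoint Cantor sets in X and an at most countable set S ⊆ X disjoint from each C_n such that μ(X \ ((⋃_n C_n) ∪ S)) = 0. -/
open MeasureTheory

/-!
The atoms of a σ-finite measure form a countable set `S`. A maximal disjoint family of Cantor
sets of positive measure avoiding `S` is countable, and it covers almost everything off `S`
because every compact set `F` of positive finite measure without atoms contains Cantor sets of
almost full measure.

Such a Cantor set is the limit of a binary scheme of compact sets. A node is a finite list of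
disjoint compact pieces of positive measure; its two children are its first piece and the
remaining ones, except that a node made of a single piece is first cut, up to a small loss of
measure, into at least two pieces of small diameter (possible since small balls have small
measure). Along every branch single-piece nodes recur, so diameters vanish and the scheme induces
a homeomorphism from `ℕ → Bool` onto its limit set; the measure lost at node `l` is at most
`η l`, where `∑ η l` is as small as we like.
-/

open Set Filter Topology ENNReal

theorem IsCantorSet.isCompact {X : Type*} [TopologicalSpace X] {C : Set X} (hC : IsCantorSet C) :
    IsCompact C := by
  obtain ⟨e⟩ := hC
  have : CompactSpace C := e.symm.compactSpace
  exact isCompact_iff_compactSpace.2 this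

namespace CantorScheme

theorem inducedMap_fst_eq_univ {β X : Type*} [TopologicalSpace X] [T2Space X]
    {A : List β → Set X} (hanti : CantorScheme.Antitone A) (hA : ∀ l, IsCompact (A l))
    (hne : ∀ l, (A l).Nonempty) : (inducedMap A).1 = univ :=
  eq_univ_of_forall fun _ =>
    IsCompact.nonempty_iInter_of_sequence_nonempty_isCompact_isClosed _
      (fun n => by rw [PiNat.res_succ]; exact hanti _ _) (fun _ => hne _) (hA _)
      (fun _ => (hA _).isClosed)

variable {X : Type*} [MetricSpace X] {A : List Bool → Set X}

theorem isCantorSet_range_inducedMap (hdom : (inducedMap A).1 = univ)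
    (hdisj : CantorScheme.Disjoint A) (hdiam : VanishingDiam A) :
    IsCantorSet (range (inducedMap A).2) := by
  let e : (inducedMap A).1 ≃ₜ (ℕ → Bool) :=
    (Homeomorph.setCongr hdom).trans (Homeomorph.Set.univ _)
  have : CompactSpace (inducedMap A).1 := e.symm.compactSpace
  have hemb := (hdiam.map_continuous.isClosedEmbedding hdisj.map_injective).isEmbedding
  exact ⟨hemb.toHomeomorph.symm.trans e⟩

theorem sdiff_subset_range_inducedMap (hdiam : VanishingDiam A) :
    A [] \ ⋃ l, A l \ (A (true :: l) ∪ A (false :: l)) ⊆ range (inducedMap A).2 := by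
  classical
  rintro y ⟨hy, hyl⟩
  simp only [mem_iUnion, Set.mem_sdiff, mem_union, not_exists, not_and, not_not] at hyl
  let br : ℕ → List Bool := fun n => Nat.rec [] (fun _ l => decide (y ∈ A (true :: l)) :: l) n
  let x : ℕ → Bool := fun n => decide (y ∈ A (true :: br n))
  have hres : ∀ n, PiNat.res x n = br n := by
    intro n
    induction n with
    | zero => rfl
    | succ n ih => rw [PiNat.res_succ, ih]
  have hmem : ∀ n, y ∈ A (PiNat.res x n) := by
    intro n
    induction n with
    | zero => exact hy
    | succ n ih =>
      rw [PiNat.res_succ]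
      have hx : x n = decide (y ∈ A (true :: PiNat.res x n)) := by rw [hres]
      by_cases h : y ∈ A (true :: PiNat.res x n)
      · rwa [hx, decide_eq_true h]
      · rw [hx, decide_eq_false h]
        exact (hyl _ ih).resolve_left h
  have hx : x ∈ (inducedMap A).1 := ⟨y, mem_iInter.2 hmem⟩
  refine ⟨⟨x, hx⟩, eq_of_forall_dist_le fun ε hε => ?_⟩
  obtain ⟨n, hn⟩ := hdiam.dist_lt ε hε x
  exact (hn _ (map_mem ⟨x, hx⟩ n) y (hmem n)).le

end CantorScheme

theorem Set.exists_maximal_pairwise_forall_mem {α : Type*} (r : α → α → Prop) (p : α → Prop) :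
    ∃ s : Set α, Maximal (fun s => s.Pairwise r ∧ ∀ a ∈ s, p a) s :=
  zorn_subset _ fun c hc hchain =>
    ⟨⋃₀ c, ⟨(pairwise_sUnion hchain.directedOn).2 fun _ hs => (hc hs).1,
      fun a ⟨_, hs, ha⟩ => (hc hs).2 a ha⟩, fun _ hs => subset_sUnion_of_mem hs⟩

theorem Set.Pairwise.countable_of_measure_ne_zero {α : Type*} [MeasurableSpace α]
    {μ : Measure α} [SFinite μ] {𝒞 : Set (Set α)} (h𝒞 : 𝒞.Pairwise Disjoint)
    (hmeas : ∀ C ∈ 𝒞, MeasurableSet C) (h0 : ∀ C ∈ 𝒞, μ C ≠ 0) : 𝒞.Countable := by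
  have := Measure.countable_meas_pos_of_disjoint_iUnion (μ := μ) (As := fun C : 𝒞 => (C : Set α))
    (fun C => hmeas C C.2) fun C D hCD => h𝒞 C.2 D.2 (Subtype.coe_injective.ne hCD)
  rw [← countable_coe_iff, ← countable_univ_iff]
  simpa [pos_iff_ne_zero, h0] using this

theorem countable_setOf_measure_singleton_ne_zero {α : Type*} [MeasurableSpace α]
    [MeasurableSingletonClass α] (μ : Measure α) [SFinite μ] : {x | μ {x} ≠ 0}.Countable := by
  simpa [pos_iff_ne_zero] using Measure.countable_meas_level_set_pos (μ := μ) measurable_id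

theorem measure_sdiff_biUnion_filter_le {α : Type*} [MeasurableSpace α] (μ : Measure α)
    (K : Set α) (L : List (Set α)) [DecidablePred fun Q : Set α => μ Q ≠ 0] :
    μ (K \ ⋃ Q ∈ L.filter fun Q => μ Q ≠ 0, Q) ≤ μ (K \ ⋃ Q ∈ L, Q) := by
  have hnull : μ (⋃ Q ∈ L.filter fun Q => ¬μ Q ≠ 0, Q) = 0 :=
    (measure_biUnion_null_iff (List.finite_toSet _).countable).2 fun Q hQ => by
      simpa using (List.mem_filter.1 hQ).2
  have hsub : K \ ⋃ Q ∈ L.filter fun Q => μ Q ≠ 0, Q ⊆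
      (K \ ⋃ Q ∈ L, Q) ∪ ⋃ Q ∈ L.filter fun Q => ¬μ Q ≠ 0, Q := by
    rintro x ⟨hxK, hx⟩
    by_cases h : x ∈ ⋃ Q ∈ L, Q
    · obtain ⟨Q, hQ, hxQ⟩ := mem_iUnion₂.1 h
      refine Or.inr (mem_iUnion₂.2 ⟨Q, List.mem_filter.2 ⟨hQ, ?_⟩, hxQ⟩)
      by_contra hQ0
      exact hx (mem_iUnion₂.2 ⟨Q, List.mem_filter.2 ⟨hQ, by simpa using hQ0⟩, hxQ⟩)
    · exact Or.inl ⟨hxK, h⟩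
  calc μ (K \ ⋃ Q ∈ L.filter fun Q => μ Q ≠ 0, Q) ≤ μ (K \ ⋃ Q ∈ L, Q) + 0 :=
        (measure_mono hsub).trans ((measure_union_le _ _).trans_eq (by rw [hnull]))
    _ = μ (K \ ⋃ Q ∈ L, Q) := add_zero _

theorem two_le_length_of_measure_lt_half {α : Type*} [MeasurableSpace α] {μ : Measure α}
    {K : Set α} (hK0 : μ K ≠ 0) (hKfin : μ K ≠ ∞) {L : List (Set α)}
    (hL : ∀ Q ∈ L, μ Q < μ K / 2) (hloss : μ (K \ ⋃ Q ∈ L, Q) < μ K / 2) : 2 ≤ L.length := by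
  have hK : μ K ≤ μ (⋃ Q ∈ L, Q) + μ (K \ ⋃ Q ∈ L, Q) :=
    (measure_le_inter_add_sdiff μ K _).trans (add_le_add_left (measure_mono inter_subset_right) _)
  have hhalf := ENNReal.half_lt_self hK0 hKfin
  rcases L with _ | ⟨Q, _ | ⟨Q', L⟩⟩
  · simp only [List.not_mem_nil, iUnion_of_empty, iUnion_empty, sdiff_empty] at hloss
    exact absurd (hloss.trans hhalf) (lt_irrefl _)
  · simp only [List.mem_singleton, iUnion_iUnion_eq_left] at hK hloss
    refine absurd (hK.trans_lt (ENNReal.add_lt_add (hL Q (by simp)) hloss)) ?_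
    rw [ENNReal.add_halves]
    exact lt_irrefl _
  · simp

section SmallPieces

variable {X : Type*} [MetricSpace X] [MeasurableSpace X] {ν : Measure X}

theorem exists_pairwise_disjoint_isCompact_of_subset_biUnion [BorelSpace X] [IsFiniteMeasure ν]
    {Vs : List (Set X)} (hVs : ∀ V ∈ Vs, IsOpen V) {K : Set X} (hK : IsCompact K)
    (hcov : K ⊆ ⋃ V ∈ Vs, V) {η : ℝ≥0∞} (hη : η ≠ 0) :
    ∃ L : List (Set X), L.Pairwise Disjoint ∧
      (∀ Q ∈ L, IsCompact Q ∧ Q ⊆ K ∧ ∃ V ∈ Vs, Q ⊆ V) ∧ ν (K \ ⋃ Q ∈ L, Q) ≤ η := by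
  induction Vs generalizing K η with
  | nil => exact ⟨[], by simp, by simp, by simp_all⟩
  | cons V Vs ih =>
    have hV : IsOpen V := hVs V List.mem_cons_self
    have hη2 : η / 2 ≠ 0 := (ENNReal.half_pos hη).ne'
    obtain ⟨L, hLdisj, hL, hloss⟩ := ih (fun W hW => hVs W (List.mem_cons_of_mem _ hW))
      (hK.diff hV) (fun x hx => by simpa [hx.2] using hcov hx.1) hη2
    obtain ⟨F, hFKV, hF, hFloss⟩ := (hK.measurableSet.inter hV.measurableSet
      ).exists_isClosed_sdiff_lt (measure_ne_top ν _) hη2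
    refine ⟨F :: L, List.pairwise_cons.2 ⟨fun Q hQ => ?_, hLdisj⟩, fun Q hQ => ?_, ?_⟩
    · exact disjoint_of_subset (hFKV.trans inter_subset_right)
        (fun x hx => ((hL Q hQ).2.1 hx).2) disjoint_compl_right
    · rcases List.mem_cons.1 hQ with rfl | hQ
      · exact ⟨hK.of_isClosed_subset hF (hFKV.trans inter_subset_left),
          hFKV.trans inter_subset_left, V, List.mem_cons_self, hFKV.trans inter_subset_right⟩
      · obtain ⟨hQc, hQK, W, hW, hQW⟩ := hL Q hQ
        exact ⟨hQc, hQK.trans sdiff_subset, W, List.mem_cons_of_mem _ hW, hQW⟩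
    · have hsplit : K \ ⋃ Q ∈ F :: L, Q ⊆ ((K ∩ V) \ F) ∪ ((K \ V) \ ⋃ Q ∈ L, Q) := by
        intro x hx
        simp only [List.mem_cons, iUnion_iUnion_eq_or_left, Set.mem_sdiff, mem_union,
          not_or] at hx
        by_cases hxV : x ∈ V
        · exact Or.inl ⟨⟨hx.1, hxV⟩, hx.2.1⟩
        · exact Or.inr ⟨⟨hx.1, hxV⟩, hx.2.2⟩
      calc ν (K \ ⋃ Q ∈ F :: L, Q)
          ≤ ν ((K ∩ V) \ F) + ν ((K \ V) \ ⋃ Q ∈ L, Q) :=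
            (measure_mono hsplit).trans (measure_union_le _ _)
        _ ≤ η / 2 + η / 2 := add_le_add hFloss.le hloss
        _ = η := ENNReal.add_halves η

theorem eventually_measure_ball_lt [OpensMeasurableSpace X] [IsFiniteMeasure ν]
    [NullSingletonClass ν] (x : X) {ε : ℝ≥0∞} (hε : ε ≠ 0) :
    ∀ᶠ r in 𝓝[>] (0 : ℝ), ν (Metric.ball x r) < ε := by
  have h := tendsto_measure_thickening_of_isClosed (μ := ν) (s := {x})
    ⟨1, one_pos, measure_ne_top ν _⟩ isClosed_singleton
  simp only [Metric.thickening_singleton, measure_singleton] at h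
  exact h.eventually (gt_mem_nhds hε.bot_lt)

theorem exists_cover_ediam_le_measure_lt [OpensMeasurableSpace X] [IsFiniteMeasure ν]
    [NullSingletonClass ν] (K : Set X) (hK : IsCompact K) {δ ε : ℝ≥0∞} (hδ : δ ≠ 0)
    (hε : ε ≠ 0) : ∃ Vs : List (Set X),
      (∀ V ∈ Vs, IsOpen V ∧ Metric.ediam V ≤ δ ∧ ν V < ε) ∧ K ⊆ ⋃ V ∈ Vs, V := by
  have hsmall : ∀ x, ∃ r > 0, ν (Metric.ball x r) < ε := fun x =>
    ((eventually_measure_ball_lt x hε).and self_mem_nhdsWithin).exists.imp fun _ hr => ⟨hr.2, hr.1⟩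
  choose r hr0 hr using hsmall
  set U : X → Set X := fun x => Metric.eball x (δ / 2) ∩ Metric.ball x (r x)
  have hUopen : ∀ x, IsOpen (U x) := fun x => Metric.isOpen_eball.inter Metric.isOpen_ball
  obtain ⟨t, -, hKt⟩ := hK.elim_nhds_subcover U fun x _ => (hUopen x).mem_nhds
    ⟨Metric.mem_eball_self (ENNReal.half_pos hδ), Metric.mem_ball_self (hr0 x)⟩
  refine ⟨t.toList.map U, ?_, by simpa using hKt⟩
  simp only [List.mem_map, Finset.mem_toList, forall_exists_index, and_imp]
  rintro _ x - rfl
  refine ⟨hUopen x, (Metric.ediam_mono inter_subset_left).trans ?_,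
    (measure_mono inter_subset_right).trans_lt (hr x)⟩
  exact Metric.ediam_eball_le.trans_eq (ENNReal.mul_div_cancel two_ne_zero ofNat_ne_top)

end SmallPieces

namespace CantorConstruction

variable {X : Type*} [MetricSpace X] [MeasurableSpace X] {ν : Measure X} {F : Set X}
  {η : List Bool → ℝ≥0∞}

def IsRefinement (ν : Measure X) (δ η : ℝ≥0∞) (K : Set X) (L : List (Set X)) : Prop :=
  2 ≤ L.length ∧ L.Pairwise Disjoint ∧
    (∀ Q ∈ L, IsCompact Q ∧ ν Q ≠ 0 ∧ Q ⊆ K ∧ Metric.ediam Q ≤ δ) ∧ ν (K \ ⋃ Q ∈ L, Q) ≤ η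

theorem exists_isRefinement [BorelSpace X] [IsFiniteMeasure ν] [NullSingletonClass ν]
    {K : Set X} (hK : IsCompact K) (hK0 : ν K ≠ 0) {δ η : ℝ≥0∞} (hδ : δ ≠ 0) (hη : η ≠ 0) :
    ∃ L, IsRefinement ν δ η K L := by
  classical
  have hK2 : ν K / 2 ≠ 0 := (ENNReal.half_pos hK0).ne'
  obtain ⟨Vs, hVs, hKVs⟩ := exists_cover_ediam_le_measure_lt K hK hδ hK2 (ν := ν)
  obtain ⟨L, hLdisj, hL, hloss⟩ := exists_pairwise_disjoint_isCompact_of_subset_biUnion (ν := ν)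
    (fun V hV => (hVs V hV).1) hK hKVs (η := min η (ν K / 2 / 2)) (by simp [hη, hK0])
  have hsmall : ∀ Q ∈ L, Metric.ediam Q ≤ δ ∧ ν Q < ν K / 2 := fun Q hQ => by
    obtain ⟨-, -, V, hV, hQV⟩ := hL Q hQ
    exact ⟨(Metric.ediam_mono hQV).trans (hVs V hV).2.1,
      (measure_mono hQV).trans_lt (hVs V hV).2.2⟩
  have hloss' := (measure_sdiff_biUnion_filter_le ν K L).trans hloss
  refine ⟨L.filter fun Q => ν Q ≠ 0, two_le_length_of_measure_lt_half hK0 (measure_ne_top ν K)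
    (fun Q hQ => (hsmall Q (List.mem_of_mem_filter hQ)).2) ?_, hLdisj.filter _, fun Q hQ => ?_,
    hloss'.trans (min_le_left _ _)⟩
  · exact (hloss'.trans (min_le_right _ _)).trans_lt
      (ENNReal.half_lt_self hK2 (ENNReal.div_ne_top (measure_ne_top ν K) two_ne_zero))
  · obtain ⟨hQL, hQ0⟩ := List.mem_filter.1 hQ
    exact ⟨(hL Q hQL).1, by simpa using hQ0, (hL Q hQL).2.1, (hsmall Q hQL).1⟩

open Classical in
/-- The junk value `[]` is never used: see `exists_isRefinement`. -/
noncomputable def refinement (ν : Measure X) (δ η : ℝ≥0∞) (K : Set X) : List (Set X) :=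
  if h : ∃ L, IsRefinement ν δ η K L then h.choose else []

def IsPieces (ν : Measure X) (L : List (Set X)) : Prop :=
  L ≠ [] ∧ L.Pairwise Disjoint ∧ ∀ Q ∈ L, IsCompact Q ∧ ν Q ≠ 0

theorem IsPieces.sublist {L L' : List (Set X)} (hL : IsPieces ν L) (h : L'.Sublist L)
    (hne : L' ≠ []) : IsPieces ν L' :=
  ⟨hne, hL.2.1.sublist h, fun Q hQ => hL.2.2 Q (h.subset hQ)⟩

def Refines (ν : Measure X) (η : ℝ≥0∞) (L L' : List (Set X)) : Prop :=
  IsPieces ν L' ∧ 2 ≤ L'.length ∧ (∀ Q ∈ L', ∃ P ∈ L, Q ⊆ P) ∧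
    ν ((⋃ P ∈ L, P) \ ⋃ Q ∈ L', Q) ≤ η

noncomputable def expand (ν : Measure X) (δ η : ℝ≥0∞) : List (Set X) → List (Set X)
  | [P] => refinement ν δ η P
  | L => L

theorem expand_of_two_le_length {δ η : ℝ≥0∞} {L : List (Set X)} (hL : 2 ≤ L.length) :
    expand ν δ η L = L := by
  match L, hL with
  | _ :: _ :: _, _ => rfl

noncomputable def pieces (ν : Measure X) (F : Set X) (η : List Bool → ℝ≥0∞) :
    List Bool → List (Set X)
  | [] => [F]
  | b :: l =>
    let L := expand ν (l.length : ℝ≥0∞)⁻¹ (η l) (pieces ν F η l)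
    if b then L.take 1 else L.drop 1

def scheme (ν : Measure X) (F : Set X) (η : List Bool → ℝ≥0∞) (l : List Bool) : Set X :=
  ⋃ Q ∈ pieces ν F η l, Q

theorem pieces_cons (b : Bool) (l : List Bool) :
    pieces ν F η (b :: l) =
      let L := expand ν (l.length : ℝ≥0∞)⁻¹ (η l) (pieces ν F η l)
      if b then L.take 1 else L.drop 1 :=
  rfl

theorem scheme_true_union_false (l : List Bool) :
    scheme ν F η (true :: l) ∪ scheme ν F η (false :: l) =
      ⋃ Q ∈ expand ν (l.length : ℝ≥0∞)⁻¹ (η l) (pieces ν F η l), Q := by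
  simp only [scheme, pieces_cons]
  conv_rhs => rw [← List.take_append_drop 1 (expand _ _ _ _)]
  simp only [List.mem_append, iUnion_or, iUnion_union_distrib, if_true, Bool.false_eq_true,
    if_false]

theorem mem_expand_of_mem_pieces_cons {b : Bool} {l : List Bool} {Q : Set X}
    (hQ : Q ∈ pieces ν F η (b :: l)) :
    Q ∈ expand ν (l.length : ℝ≥0∞)⁻¹ (η l) (pieces ν F η l) := by
  rw [pieces_cons] at hQ
  cases b
  · exact List.mem_of_mem_drop hQ
  · exact List.mem_of_mem_take hQ

theorem length_pieces_cons_lt {l : List Bool} (hl : 2 ≤ (pieces ν F η l).length) (b : Bool) :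
    (pieces ν F η (b :: l)).length < (pieces ν F η l).length := by
  rw [pieces_cons, expand_of_two_le_length hl]
  cases b <;> simp <;> omega

variable [BorelSpace X] [IsFiniteMeasure ν] [NullSingletonClass ν]

theorem isRefinement_refinement {K : Set X} (hK : IsCompact K) (hK0 : ν K ≠ 0)
    {δ η : ℝ≥0∞} (hδ : δ ≠ 0) (hη : η ≠ 0) : IsRefinement ν δ η K (refinement ν δ η K) := by
  rw [refinement, dif_pos (exists_isRefinement hK hK0 hδ hη)]
  exact Exists.choose_spec _

theorem refines_expand {δ η : ℝ≥0∞} {L : List (Set X)} (hL : IsPieces ν L) (hδ : δ ≠ 0)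
    (hη : η ≠ 0) : Refines ν η L (expand ν δ η L) := by
  obtain ⟨hne, hdisj, hpieces⟩ := hL
  rcases L with _ | ⟨P, _ | ⟨P', L⟩⟩
  · exact absurd rfl hne
  · show Refines ν η [P] (refinement ν δ η P)
    obtain ⟨hlen, hdisj', hQ, hloss⟩ :=
      isRefinement_refinement (hpieces P (by simp)).1 (hpieces P (by simp)).2 hδ hη
    refine ⟨⟨List.ne_nil_of_length_pos (by omega), hdisj', fun Q hQ' =>
      ⟨(hQ Q hQ').1, (hQ Q hQ').2.1⟩⟩, hlen, fun Q hQ' => ⟨P, by simp, (hQ Q hQ').2.2.1⟩, ?_⟩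
    simpa using hloss
  · rw [expand_of_two_le_length (by simp)]
    exact ⟨⟨hne, hdisj, hpieces⟩, by simp, fun Q hQ => ⟨Q, hQ, subset_rfl⟩, by simp⟩

theorem ediam_le_of_mem_expand_singleton {δ η : ℝ≥0∞} {P Q : Set X} (hP : IsCompact P)
    (hP0 : ν P ≠ 0) (hδ : δ ≠ 0) (hη : η ≠ 0) (hQ : Q ∈ expand ν δ η [P]) :
    Metric.ediam Q ≤ δ :=
  ((isRefinement_refinement hP hP0 hδ hη).2.2.1 Q hQ).2.2.2

theorem isPieces_pieces (hF : IsCompact F) (hF0 : ν F ≠ 0) (hη : ∀ l, η l ≠ 0) :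
    ∀ l, IsPieces ν (pieces ν F η l)
  | [] => ⟨List.cons_ne_nil _ _, List.pairwise_singleton _ _, by simp [pieces, hF, hF0]⟩
  | b :: l => by
    obtain ⟨hE, hlen, -, -⟩ := refines_expand (δ := (l.length : ℝ≥0∞)⁻¹)
      (isPieces_pieces hF hF0 hη l) (by simp) (hη l)
    rw [pieces_cons]
    cases b
    · exact hE.sublist (List.drop_sublist 1 _) (List.ne_nil_of_length_pos (by simp; omega))
    · exact hE.sublist (List.take_sublist 1 _) (List.ne_nil_of_length_pos (by simp; omega))

theorem refines_pieces (hF : IsCompact F) (hF0 : ν F ≠ 0) (hη : ∀ l, η l ≠ 0) (l : List Bool) :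
    Refines ν (η l) (pieces ν F η l) (expand ν (l.length : ℝ≥0∞)⁻¹ (η l) (pieces ν F η l)) :=
  refines_expand (isPieces_pieces hF hF0 hη l) (by simp) (hη l)

theorem exists_subset_of_mem_pieces_cons (hF : IsCompact F) (hF0 : ν F ≠ 0)
    (hη : ∀ l, η l ≠ 0) {b : Bool} {l : List Bool} {Q : Set X}
    (hQ : Q ∈ pieces ν F η (b :: l)) : ∃ P ∈ pieces ν F η l, Q ⊆ P :=
  (refines_pieces hF hF0 hη l).2.2.1 Q (mem_expand_of_mem_pieces_cons hQ)

theorem scheme_cons_subset (hF : IsCompact F) (hF0 : ν F ≠ 0) (hη : ∀ l, η l ≠ 0)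
    (b : Bool) (l : List Bool) : scheme ν F η (b :: l) ⊆ scheme ν F η l :=
  iUnion₂_subset fun _ hQ =>
    let ⟨_, hP, hQP⟩ := exists_subset_of_mem_pieces_cons hF hF0 hη hQ
    hQP.trans (subset_biUnion_of_mem (u := id) hP)

theorem disjoint_scheme_true_false (hF : IsCompact F) (hF0 : ν F ≠ 0)
    (hη : ∀ l, η l ≠ 0) (l : List Bool) :
    Disjoint (scheme ν F η (true :: l)) (scheme ν F η (false :: l)) := by
  have hdisj := (refines_pieces hF hF0 hη l).1.2.1
  rw [← List.take_append_drop 1 (expand _ _ _ _), List.pairwise_append] at hdisj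
  simp only [scheme, pieces_cons, if_true, Bool.false_eq_true, if_false]
  exact disjoint_iUnion₂_left.2 fun P hP => disjoint_iUnion₂_right.2 fun Q hQ => hdisj.2.2 P hP Q hQ

theorem measure_scheme_sdiff_le (hF : IsCompact F) (hF0 : ν F ≠ 0)
    (hη : ∀ l, η l ≠ 0) (l : List Bool) :
    ν (scheme ν F η l \
      (scheme ν F η (true :: l) ∪ scheme ν F η (false :: l))) ≤ η l := by
  rw [scheme_true_union_false]
  exact (refines_pieces hF hF0 hη l).2.2.2

theorem isCompact_scheme (hF : IsCompact F) (hF0 : ν F ≠ 0) (hη : ∀ l, η l ≠ 0)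
    (l : List Bool) : IsCompact (scheme ν F η l) :=
  (List.finite_toSet _).isCompact_biUnion fun Q hQ => ((isPieces_pieces hF hF0 hη l).2.2 Q hQ).1

theorem scheme_nonempty (hF : IsCompact F) (hF0 : ν F ≠ 0) (hη : ∀ l, η l ≠ 0)
    (l : List Bool) : (scheme ν F η l).Nonempty := by
  obtain ⟨hne, -, hpieces⟩ := isPieces_pieces hF hF0 hη l
  obtain ⟨Q, hQ⟩ := List.exists_mem_of_ne_nil _ hne
  obtain ⟨x, hx⟩ := nonempty_of_measure_ne_zero (hpieces Q hQ).2
  exact ⟨x, mem_biUnion hQ hx⟩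

theorem ediam_le_of_mem_pieces_cons (hF : IsCompact F) (hF0 : ν F ≠ 0) (hη : ∀ l, η l ≠ 0)
    {l : List Bool} (hl : (pieces ν F η l).length = 1) {b : Bool} {Q : Set X}
    (hQ : Q ∈ pieces ν F η (b :: l)) : Metric.ediam Q ≤ (l.length : ℝ≥0∞)⁻¹ := by
  obtain ⟨P, hP⟩ := List.length_eq_one_iff.1 hl
  have hQ' := mem_expand_of_mem_pieces_cons hQ
  rw [hP] at hQ'
  obtain ⟨hPc, hP0⟩ := (isPieces_pieces hF hF0 hη l).2.2 P (by simp [hP])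
  exact ediam_le_of_mem_expand_singleton hPc hP0 (by simp) (hη l) hQ'

theorem exists_le_length_pieces_res_eq_one (hF : IsCompact F) (hF0 : ν F ≠ 0)
    (hη : ∀ l, η l ≠ 0) (x : ℕ → Bool) (k : ℕ) :
    ∃ n ≥ k, (pieces ν F η (PiNat.res x n)).length = 1 := by
  set N := fun n => (pieces ν F η (PiNat.res x n)).length
  have hN : ∀ n, 0 < N n := fun n =>
    List.length_pos_of_ne_nil (isPieces_pieces hF hF0 hη (PiNat.res x n)).1
  induction hk : N k using Nat.strong_induction_on generalizing k with
  | _ m ih =>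
    by_cases h1 : N k = 1
    · exact ⟨k, le_rfl, h1⟩
    have hlt : N (k + 1) < N k := length_pieces_cons_lt (show 2 ≤ N k by grind) (x k)
    obtain ⟨n, hn, hn1⟩ := ih (N (k + 1)) (hk ▸ hlt) (k + 1) rfl
    exact ⟨n, by omega, hn1⟩

theorem ediam_le_of_mem_pieces_res (hF : IsCompact F) (hF0 : ν F ≠ 0) (hη : ∀ l, η l ≠ 0)
    {x : ℕ → Bool} {k : ℕ} (hk : (pieces ν F η (PiNat.res x k)).length = 1) {n : ℕ} (hn : k < n)
    {Q : Set X} (hQ : Q ∈ pieces ν F η (PiNat.res x n)) : Metric.ediam Q ≤ (k : ℝ≥0∞)⁻¹ := by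
  induction n, hn using Nat.le_induction generalizing Q with
  | base =>
    rw [PiNat.res_succ] at hQ
    simpa [PiNat.res_length] using ediam_le_of_mem_pieces_cons hF hF0 hη hk hQ
  | succ n hn ih =>
    rw [PiNat.res_succ] at hQ
    obtain ⟨P, hP, hQP⟩ := exists_subset_of_mem_pieces_cons hF hF0 hη hQ
    exact (Metric.ediam_mono hQP).trans (ih hP)

theorem vanishingDiam_scheme (hF : IsCompact F) (hF0 : ν F ≠ 0) (hη : ∀ l, η l ≠ 0) :
    CantorScheme.VanishingDiam (scheme ν F η) := by
  intro x
  have hanti : Antitone fun n => scheme ν F η (PiNat.res x n) :=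
    antitone_nat_of_succ_le fun n => by
      rw [PiNat.res_succ]
      exact scheme_cons_subset hF hF0 hη _ _
  rw [ENNReal.tendsto_atTop_zero]
  intro ε hε
  obtain ⟨k, hk⟩ := ENNReal.exists_inv_nat_lt hε.ne'
  obtain ⟨k₁, hk₁, hN₁⟩ := exists_le_length_pieces_res_eq_one hF hF0 hη x k
  obtain ⟨k₂, hk₂, hN₂⟩ := exists_le_length_pieces_res_eq_one hF hF0 hη x (k₁ + 1)
  obtain ⟨Q, hQ⟩ := List.length_eq_one_iff.1 hN₂
  refine ⟨k₂, fun n hn => ?_⟩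
  calc Metric.ediam (scheme ν F η (PiNat.res x n))
      ≤ Metric.ediam (scheme ν F η (PiNat.res x k₂)) := Metric.ediam_mono (hanti hn)
    _ = Metric.ediam Q := by simp [scheme, hQ]
    _ ≤ (k₁ : ℝ≥0∞)⁻¹ :=
        ediam_le_of_mem_pieces_res hF hF0 hη hN₁ (n := k₂) (by omega) (by simp [hQ])
    _ ≤ (k : ℝ≥0∞)⁻¹ := ENNReal.inv_le_inv.2 (by exact_mod_cast hk₁)
    _ ≤ ε := hk.le

end CantorConstruction

open CantorConstruction in
theorem exists_isCantorSet_subset_measure_sdiff_le {X : Type*} [MetricSpace X]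
    [MeasurableSpace X] [BorelSpace X] {ν : Measure X} [IsFiniteMeasure ν] [NullSingletonClass ν]
    {F : Set X} (hF : IsCompact F) (hF0 : ν F ≠ 0) {ε : ℝ≥0∞} (hε : ε ≠ 0) :
    ∃ C ⊆ F, IsCantorSet C ∧ ν (F \ C) ≤ ε := by
  obtain ⟨η, hη0, hηε⟩ := ENNReal.exists_pos_sum_of_countable' hε (List Bool)
  have hη : ∀ l, η l ≠ 0 := fun l => (hη0 l).ne'
  set A := scheme ν F η
  have hA : A [] = F := by simp [A, scheme, pieces]
  have hdom := CantorScheme.inducedMap_fst_eq_univ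
    (fun l b => scheme_cons_subset hF hF0 hη b l) (isCompact_scheme hF hF0 hη)
    (scheme_nonempty hF hF0 hη)
  have hdisj : CantorScheme.Disjoint A := fun l a b hab => by
    have := disjoint_scheme_true_false hF hF0 hη l
    cases a <;> cases b <;> first | exact absurd rfl hab | exact this | exact this.symm
  have hdiam := vanishingDiam_scheme hF hF0 hη
  refine ⟨range (CantorScheme.inducedMap A).2, ?_,
    CantorScheme.isCantorSet_range_inducedMap hdom hdisj hdiam, ?_⟩
  · rintro _ ⟨x, rfl⟩
    exact hA ▸ CantorScheme.map_mem x 0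
  calc ν (F \ range (CantorScheme.inducedMap A).2)
      ≤ ν (⋃ l, A l \ (A (true :: l) ∪ A (false :: l))) :=
        measure_mono (sdiff_subset_comm.1 (hA ▸ CantorScheme.sdiff_subset_range_inducedMap hdiam))
    _ ≤ ∑' l, η l := (measure_iUnion_le _).trans
        (ENNReal.tsum_le_tsum (measure_scheme_sdiff_le hF hF0 hη))
    _ ≤ ε := hηε.le

theorem exists_isCantorSet_subset_measure_ne_zero {X : Type*} [MetricSpace X] [MeasurableSpace X]
    [BorelSpace X] (μ : Measure X) [SigmaFinite μ] [μ.InnerRegular] {W : Set X}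
    (hW : MeasurableSet W) (hW0 : μ W ≠ 0) (hatom : ∀ x ∈ W, μ {x} = 0) :
    ∃ C ⊆ W, IsCantorSet C ∧ μ C ≠ 0 := by
  obtain ⟨n, hn⟩ : ∃ n, μ (W ∩ spanningSets μ n) ≠ 0 := by
    by_contra! h
    rw [← inter_univ W, ← iUnion_spanningSets μ, inter_iUnion] at hW0
    exact hW0 (measure_iUnion_null h)
  obtain ⟨K, hKW, hK, hK0⟩ :=
    (hW.inter (measurableSet_spanningSets μ n)).exists_lt_isCompact (pos_iff_ne_zero.2 hn)
  set ν := μ.restrict K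
  have : IsFiniteMeasure ν := isFiniteMeasure_restrict.2
    ((measure_mono (hKW.trans inter_subset_right)).trans_lt (measure_spanningSets_lt_top μ n)).ne
  have : NullSingletonClass ν := ⟨fun x => by
    rw [Measure.restrict_apply (measurableSet_singleton x)]
    by_cases hx : x ∈ K
    · rw [singleton_inter_of_mem hx]
      exact hatom x (hKW hx).1
    · rw [singleton_inter_of_notMem hx, measure_empty]⟩
  have hνK : ν K ≠ 0 := by
    rw [Measure.restrict_apply_self]
    exact hK0.ne'
  obtain ⟨C, hCK, hC, hCloss⟩ :=
    exists_isCantorSet_subset_measure_sdiff_le hK hνK (ENNReal.half_pos hνK).ne'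
  refine ⟨C, hCK.trans (hKW.trans inter_subset_left), hC, fun hC0 => ?_⟩
  have : ν K ≤ ν K / 2 := calc
    ν K ≤ ν (K ∩ C) + ν (K \ C) := measure_le_inter_add_sdiff ν K C
    _ ≤ 0 + ν K / 2 := add_le_add ((Measure.restrict_apply_le K _).trans
        ((measure_mono inter_subset_right).trans hC0.le)) hCloss
    _ = ν K / 2 := zero_add _
  exact (ENNReal.half_lt_self hνK (measure_ne_top ν K)).not_ge this

theorem exists_countable_cantorSets_and_countable_set_ae_cover_general
    {X : Type*} [MetricSpace X] [MeasurableSpace X] [BorelSpace X]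
    (μ : Measure X) [SigmaFinite μ] [μ.InnerRegular] :
    ∃ (𝒞 : Set (Set X)) (S : Set X),
      𝒞.Countable ∧
      (∀ C ∈ 𝒞, IsCantorSet C) ∧
      𝒞.Pairwise Disjoint ∧
      S.Countable ∧
      (∀ C ∈ 𝒞, Disjoint S C) ∧
      μ (⋃₀ 𝒞 ∪ S)ᶜ = 0 := by
  set S := {x | μ {x} ≠ 0}
  have hS : S.Countable := countable_setOf_measure_singleton_ne_zero μ
  obtain ⟨𝒞, ⟨h𝒞disj, h𝒞⟩, hmax⟩ := exists_maximal_pairwise_forall_mem Disjoint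
    fun C => IsCantorSet C ∧ Disjoint S C ∧ μ C ≠ 0
  have h𝒞meas : ∀ C ∈ 𝒞, MeasurableSet C := fun C hC => (h𝒞 C hC).1.isCompact.measurableSet
  have h𝒞c : 𝒞.Countable := h𝒞disj.countable_of_measure_ne_zero h𝒞meas fun C hC => (h𝒞 C hC).2.2
  refine ⟨𝒞, S, h𝒞c, fun C hC => (h𝒞 C hC).1, h𝒞disj, hS, fun C hC => (h𝒞 C hC).2.1, ?_⟩
  by_contra h0
  obtain ⟨C, hCW, hC, hC0⟩ := exists_isCantorSet_subset_measure_ne_zero μ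
    ((MeasurableSet.sUnion h𝒞c h𝒞meas).union hS.measurableSet).compl h0
    fun x hx => not_not.1 fun h => hx (Or.inr h)
  have hCD : ∀ D ∈ 𝒞, Disjoint C D := fun D hD =>
    disjoint_of_subset hCW ((subset_sUnion_of_mem hD).trans subset_union_left) disjoint_compl_left
  have hC𝒞 : C ∈ 𝒞 :=
    hmax ⟨pairwise_insert.2 ⟨h𝒞disj, fun D hD _ => ⟨hCD D hD, (hCD D hD).symm⟩⟩,
      forall_mem_insert.2 ⟨⟨hC, disjoint_of_subset subset_union_right hCW disjoint_compl_right,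
        hC0⟩, h𝒞⟩⟩ (subset_insert C 𝒞) (mem_insert C 𝒞)
  exact hC0 (by rw [eq_empty_of_forall_notMem fun x hx => hCW hx (Or.inl ⟨C, hC𝒞, hx⟩),
    measure_empty])

/-- Given a metric space `X` and a σ-finite positive regular Borel measure `μ` on `X`,
there exist an at most countable collection `𝒞` of pairwise disjoint Cantor sets in `X`
and an at most countable set `S ⊆ X` disjoint from each member of `𝒞` such that
`μ (X \ ((⋃ 𝒞) ∪ S)) = 0`. -/
theorem exists_countable_cantorSets_and_countable_set_ae_cover
    {X : Type*} [MetricSpace X] [MeasurableSpace X] [BorelSpace X]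
    (μ : Measure X) [SigmaFinite μ] [μ.InnerRegular] [μ.OuterRegular] :
    ∃ (𝒞 : Set (Set X)) (S : Set X),
      𝒞.Countable ∧
      (∀ C ∈ 𝒞, IsCantorSet C) ∧
      𝒞.Pairwise Disjoint ∧
      S.Countable ∧
      (∀ C ∈ 𝒞, Disjoint S C) ∧
      μ (⋃₀ 𝒞 ∪ S)ᶜ = 0 :=
  exists_countable_cantorSets_and_countable_set_ae_cover_general μ
end
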